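/- With notation as above (S/R finite Galois with group G, u ∈ Z¹(G, Aut_S(g⊗S)), û the lifted cocycle in Z¹(G, Aut_k(ĝ_S))), the fixed-point algebra L_û = { x ∈ ĝ_S : û_g(ᵍx) = x for all g ∈ G } projects onto the descended algebra L_u = { x ∈ g⊗S : u_g(ᵍx) = x for all g ∈ G }: the restriction of the projection π : ĝ_S → g⊗S maps L_û surjectively onto L_u, with central kernel, so L_û is a central extension of L_u. -/

import Mathlib

/-! The twisted maps `Φ g w = û_g(ᵍw)` on `ĝ_S` need not compose like a group action
everywhere, but they do on the span of the brackets `(⁅x, y⁆, P x y)` of `ĝ_S`: each `û_g`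
preserves brackets, the bracket only sees the `𝔤 ⊗ S`-components, and there
`ψ g = u_g ∘ ᵍ(-)` is an action by the cocycle identity. As `𝔤` is perfect, so is `𝔤 ⊗ S`,
hence this span projects onto `𝔤 ⊗ S`. Averaging `Φ` over the finite group `G` (legitimate
since `|G|` is invertible in `k`) turns a lift in the span of a `ψ`-fixed `v` into a
`Φ`-fixed lift of `v`. The kernel is central because the bracket of `ĝ_S` factors through `π`.
-/

open scoped TensorProduct

/-- The subspace `dS ⊆ Ω_{S/k}` of exact differentials, as a `k`-submodule. -/
noncomputable def exactDifferentials (k S : Type*) [Field k] [CommRing S]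
    [Algebra k S] : Submodule k (Ω[S⁄k]) :=
  LinearMap.range ((KaehlerDifferential.D k S : S →ₗ[k] Ω[S⁄k]))

open Submodule

theorem LieAlgebra.IsSimple.span_lie_eq_top (R L : Type*) [CommRing R] [LieRing L]
    [LieAlgebra R L] [LieAlgebra.IsSimple R L] :
    span R {m : L | ∃ x y : L, ⁅x, y⁆ = m} = ⊤ := by
  have hder : ⁅(⊤ : LieIdeal R L), (⊤ : LieIdeal R L)⁆ = ⊤ := by
    refine (IsSimple.eq_bot_or_eq_top _).resolve_left fun h =>
      IsSimple.non_abelian R (L := L) ⟨fun x y => ?_⟩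
    simpa [h] using LieSubmodule.lie_mem_lie (I := (⊤ : LieIdeal R L)) (N := (⊤ : LieIdeal R L))
      (LieSubmodule.mem_top x) (LieSubmodule.mem_top y)
  rw [← LieSubmodule.top_toSubmodule (R := R) (L := L) (M := L), ← hder,
    LieSubmodule.lieIdeal_oper_eq_linear_span']
  simp

theorem span_lie_tensor_eq_top {k S L : Type*} [CommRing k] [CommRing S] [Algebra k S]
    [LieRing L] [LieAlgebra k L] (h : span k {m : L | ∃ x y : L, ⁅x, y⁆ = m} = ⊤) :
    span k {m : S ⊗[k] L | ∃ x y : S ⊗[k] L, ⁅x, y⁆ = m} = ⊤ := by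
  rw [eq_top_iff, ← TensorProduct.span_tmul_eq_top, span_le]
  rintro _ ⟨a, x, rfl⟩
  have hx : x ∈ span k {m : L | ∃ x y : L, ⁅x, y⁆ = m} := h ▸ mem_top
  refine (span_le.mpr ?_ : _ ≤ (span k _).comap (TensorProduct.mk k S L a)) hx
  rintro _ ⟨y, z, rfl⟩
  exact subset_span ⟨a ⊗ₜ y, 1 ⊗ₜ z, by simp [LieAlgebra.ExtendScalars.bracket_tmul]⟩

theorem exists_mem_span_lie_prod {k L Z : Type*} [CommRing k] [LieRing L] [LieAlgebra k L]
    [AddCommGroup Z] [Module k Z] (P : L →ₗ[k] L →ₗ[k] Z)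
    (h : span k {m : L | ∃ x y : L, ⁅x, y⁆ = m} = ⊤) (v : L) :
    ∃ z : Z, (v, z) ∈ span k {e : L × Z | ∃ x y : L, (⁅x, y⁆, P x y) = e} := by
  have hv : v ∈ (span k {e : L × Z | ∃ x y : L, (⁅x, y⁆, P x y) = e}).map
      (LinearMap.fst k L Z) := by
    rw [map_span, show LinearMap.fst k L Z '' _ = {m : L | ∃ x y : L, ⁅x, y⁆ = m} by ext; simp,
      h]
    exact mem_top
  obtain ⟨w, hw, rfl⟩ := hv
  exact ⟨w.2, hw⟩

theorem map_lie_of_map_tmul {k S L F : Type*} [CommRing k] [CommRing S] [Algebra k S]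
    [LieRing L] [LieAlgebra k L] [FunLike F S S] [MulHomClass F S S] (σ : F)
    (f : S ⊗[k] L →ₗ[k] S ⊗[k] L) (hf : ∀ a x, f (a ⊗ₜ x) = σ a ⊗ₜ x) (x y : S ⊗[k] L) :
    f ⁅x, y⁆ = ⁅f x, f y⁆ := by
  induction x using TensorProduct.induction_on with
  | zero => simp
  | add x₁ x₂ h₁ h₂ => simp [add_lie, h₁, h₂]
  | tmul a x =>
    induction y using TensorProduct.induction_on with
    | zero => simp
    | add y₁ y₂ h₁ h₂ => simp [lie_add, h₁, h₂]
    | tmul b y => simp [LieAlgebra.ExtendScalars.bracket_tmul, hf]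

theorem map_bilin_of_map_tmul {k S L Z : Type*} [CommRing k] [CommRing S] [Algebra k S]
    [AddCommGroup L] [Module k L] [AddCommGroup Z] [Module k Z] (σ : S → S)
    (f : S ⊗[k] L →ₗ[k] S ⊗[k] L) (hf : ∀ a x, f (a ⊗ₜ x) = σ a ⊗ₜ x)
    (B : L →ₗ[k] L →ₗ[k] k) (c : S → S → Z) (P : S ⊗[k] L →ₗ[k] S ⊗[k] L →ₗ[k] Z)
    (hP : ∀ a b x y, P (a ⊗ₜ x) (b ⊗ₜ y) = B x y • c a b)
    (T : Z →ₗ[k] Z) (hT : ∀ a b, T (c a b) = c (σ a) (σ b)) (x y : S ⊗[k] L) :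
    T (P x y) = P (f x) (f y) := by
  have : P.compr₂ T = P.compl₁₂ f f :=
    TensorProduct.ext' fun a x => TensorProduct.ext' fun b y => by simp [hP, hT, hf]
  exact LinearMap.congr_fun₂ this x y

theorem map_map_eq_map_mul_of_mem_span {k V M G : Type*} [CommSemiring k] [AddCommMonoid V]
    [Module k V] [Mul G] (Φ : G → V →ₗ[k] V) (ψ : G → M → M) (hψ : ∀ g h x, ψ g (ψ h x) = ψ (g * h) x)
    (f : M → M → V) (hf : ∀ g x y, Φ g (f x y) = f (ψ g x) (ψ g y))
    {w : V} (hw : w ∈ span k {e | ∃ x y, f x y = e}) (g h : G) :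
    Φ g (Φ h w) = Φ (g * h) w := by
  refine LinearMap.eqOn_span (f := Φ g ∘ₗ Φ h) ?_ hw
  rintro _ ⟨x, y, rfl⟩
  simp [hf, hψ]

theorem map_sum_map_eq_sum_map {k V G : Type*} [CommSemiring k] [AddCommMonoid V] [Module k V]
    [Group G] [Fintype G] (Φ : G → V →ₗ[k] V) {w : V}
    (hw : ∀ g h, Φ g (Φ h w) = Φ (g * h) w) (g : G) :
    Φ g (∑ h, Φ h w) = ∑ h, Φ h w := by
  rw [map_sum]
  simp_rw [hw]
  exact Fintype.sum_equiv (Equiv.mulLeft g) _ _ fun _ => rfl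

theorem exists_fixed_lift {k V Z G : Type*} [Field k] [AddCommGroup V] [Module k V]
    [AddCommGroup Z] [Module k Z] [Group G] [Fintype G] (hG : (Fintype.card G : k) ≠ 0)
    (Φ : G → V × Z →ₗ[k] V × Z) (ψ : G → V → V) (hΦ : ∀ g w, (Φ g w).1 = ψ g w.1)
    {v : V} (hv : ∀ g, ψ g v = v) {z : Z}
    (hmul : ∀ g h, Φ g (Φ h (v, z)) = Φ (g * h) (v, z)) :
    ∃ z' : Z, ∀ g, Φ g (v, z') = (v, z') := by
  set s := ∑ h, Φ h (v, z)
  have hs : s.1 = (Fintype.card G : k) • v := by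
    simp [s, Prod.fst_sum, hΦ, hv, ← Nat.cast_smul_eq_nsmul k]
  have havg : ((v, (Fintype.card G : k)⁻¹ • s.2) : V × Z) = (Fintype.card G : k)⁻¹ • s := by
    ext
    · simp [hs, smul_smul, hG]
    · rfl
  exact ⟨_, fun g => by rw [havg, map_smul, map_sum_map_eq_sum_map Φ hmul]⟩

theorem statement13_general (k : Type*) [Field k] [CharZero k]
    (𝔤 : Type*) [LieRing 𝔤] [LieAlgebra k 𝔤] [FiniteDimensional k 𝔤]
    [LieAlgebra.IsSimple k 𝔤]
    (R S : Type*) [CommRing R] [CommRing S] [Algebra k S]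
    [Algebra R S]
    (G : Type*) [Group G] [Fintype G]
    (ρ : G →* (S ≃ₐ[R] S))
    -- the Kassel cocycle on 𝔤 ⊗ S
    (P : (S ⊗[k] 𝔤) →ₗ[k] (S ⊗[k] 𝔤) →ₗ[k]
      (Ω[S⁄k] ⧸ exactDifferentials k S))
    (hP : ∀ (a b : S) (x y : 𝔤),
      P (a ⊗ₜ x) (b ⊗ₜ y) = killingForm k 𝔤 x y •
        (exactDifferentials k S).mkQ (a • KaehlerDifferential.D k S b))
    -- the natural actions of G on 𝔤 ⊗ S and on Ω_S/dS
    (A : G → ((S ⊗[k] 𝔤) ≃ₗ[k] (S ⊗[k] 𝔤)))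
    (hA : ∀ (g : G) (a : S) (x : 𝔤), A g (a ⊗ₜ x) = ρ g a ⊗ₜ x)
    (AΩ : G → ((Ω[S⁄k] ⧸ exactDifferentials k S) ≃ₗ[k]
      (Ω[S⁄k] ⧸ exactDifferentials k S)))
    (hAΩ : ∀ (g : G) (a b : S),
      AΩ g ((exactDifferentials k S).mkQ (a • KaehlerDifferential.D k S b))
        = (exactDifferentials k S).mkQ (ρ g a • KaehlerDifferential.D k S (ρ g b)))
    -- the cocycle u ∈ Z¹(G, Aut_S(𝔤⊗S))
    (u : G → ((S ⊗[k] 𝔤) ≃ₗ⁅S⁆ (S ⊗[k] 𝔤)))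
    (hu : ∀ (g₁ g₂ : G) (v : S ⊗[k] 𝔤),
      u (g₁ * g₂) v = u g₁ (A g₁ (u g₂ (A g₁⁻¹ v))))
    -- the lifts û_g of the u_g to automorphisms of ĝ_S = (𝔤⊗S) ⊕ Ω_S/dS
    (hatu : G → (((S ⊗[k] 𝔤) × (Ω[S⁄k] ⧸ exactDifferentials k S)) ≃ₗ[k]
      ((S ⊗[k] 𝔤) × (Ω[S⁄k] ⧸ exactDifferentials k S))))
    (hhom : ∀ (g : G) (w w' : (S ⊗[k] 𝔤) × (Ω[S⁄k] ⧸ exactDifferentials k S)),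
      hatu g (⁅w.1, w'.1⁆, P w.1 w'.1)
        = (⁅(hatu g w).1, (hatu g w').1⁆, P (hatu g w).1 (hatu g w').1))
    (hlift : ∀ (g : G) (w : (S ⊗[k] 𝔤) × (Ω[S⁄k] ⧸ exactDifferentials k S)),
      (hatu g w).1 = u g w.1) :
    -- conclusion: π(L_û) ⊆ L_u, π : L_û → L_u is surjective, and its kernel
    -- is central in L_û
    (∀ w : (S ⊗[k] 𝔤) × (Ω[S⁄k] ⧸ exactDifferentials k S),
      (∀ g : G, hatu g (A g w.1, AΩ g w.2) = w) →
      (∀ g : G, u g (A g w.1) = w.1)) ∧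
    (∀ v : S ⊗[k] 𝔤, (∀ g : G, u g (A g v) = v) →
      ∃ z : Ω[S⁄k] ⧸ exactDifferentials k S,
        ∀ g : G, hatu g (A g v, AΩ g z) = (v, z)) ∧
    (∀ w : (S ⊗[k] 𝔤) × (Ω[S⁄k] ⧸ exactDifferentials k S),
      (∀ g : G, hatu g (A g w.1, AΩ g w.2) = w) → w.1 = 0 →
      ∀ w' : (S ⊗[k] 𝔤) × (Ω[S⁄k] ⧸ exactDifferentials k S),
        (∀ g : G, hatu g (A g w'.1, AΩ g w'.2) = w') →
        (⁅w.1, w'.1⁆, P w.1 w'.1)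
          = ((0 : S ⊗[k] 𝔤), (0 : Ω[S⁄k] ⧸ exactDifferentials k S))) := by
  let Φ : G → (S ⊗[k] 𝔤) × (Ω[S⁄k] ⧸ exactDifferentials k S) →ₗ[k]
      (S ⊗[k] 𝔤) × (Ω[S⁄k] ⧸ exactDifferentials k S) :=
    fun g => (hatu g).toLinearMap ∘ₗ (A g).toLinearMap.prodMap (AΩ g).toLinearMap
  let ψ : G → S ⊗[k] 𝔤 → S ⊗[k] 𝔤 := fun g v => u g (A g v)
  have hΦ_fst : ∀ g w, (Φ g w).1 = ψ g w.1 := fun g w => hlift g _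
  have hA_mul : ∀ g h v, A g (A h v) = A (g * h) v := fun g h =>
    LinearMap.congr_fun (f := (A g).toLinearMap ∘ₗ (A h).toLinearMap)
      (g := (A (g * h)).toLinearMap) (TensorProduct.ext' fun a x => by simp [hA])
  have hψ_mul : ∀ g h v, ψ g (ψ h v) = ψ (g * h) v := fun g h v => by
    simp only [ψ, hu g h, hA_mul, inv_mul_cancel_left]
  have hΦ_lie : ∀ g x y, Φ g (⁅x, y⁆, P x y) = (⁅ψ g x, ψ g y⁆, P (ψ g x) (ψ g y)) := by
    intro g x y
    have hlie := map_lie_of_map_tmul (ρ g) (A g).toLinearMap (hA g) x y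
    have hcocycle := map_bilin_of_map_tmul (ρ g) (A g).toLinearMap (hA g) (killingForm k 𝔤)
      _ P hP (AΩ g).toLinearMap (hAΩ g) x y
    simp only [LinearEquiv.coe_coe] at hlie hcocycle
    simpa [Φ, hlie, hcocycle, hlift, ψ] using hhom g (A g x, 0) (A g y, 0)
  have hperfect := span_lie_tensor_eq_top (S := S) (LieAlgebra.IsSimple.span_lie_eq_top k 𝔤)
  refine ⟨fun w hw g => (hΦ_fst g w).symm.trans (congrArg Prod.fst (hw g)), fun v hv => ?_, ?_⟩
  · obtain ⟨z, hz⟩ := exists_mem_span_lie_prod P hperfect v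
    exact exists_fixed_lift (Nat.cast_ne_zero.mpr Fintype.card_ne_zero) Φ ψ hΦ_fst hv
      (map_map_eq_map_mul_of_mem_span Φ ψ hψ_mul _ hΦ_lie hz)
  · rintro w - hw w' -
    simp [hw]

/-- With `S/R` finite Galois with group `G`, `u ∈ Z¹(G, Aut_S(𝔤⊗S))`
and `û` the lifted cocycle, the fixed-point algebra
`L_û = {w ∈ ĝ_S : û_g(ᵍw) = w ∀g}` projects onto the descended algebra
`L_u = {v ∈ 𝔤⊗S : u_g(ᵍv) = v ∀g}` under the projection `π : ĝ_S → 𝔤⊗S`, with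
central kernel; so `L_û` is a central extension of `L_u`. -/
theorem statement13 (k : Type*) [Field k] [CharZero k]
    (𝔤 : Type*) [LieRing 𝔤] [LieAlgebra k 𝔤] [FiniteDimensional k 𝔤]
    [LieAlgebra.IsSimple k 𝔤]
    (hsplit : ∃ H : LieSubalgebra k 𝔤, H.IsCartanSubalgebra ∧
      LieModule.IsTriangularizable k H 𝔤)
    (R S : Type*) [CommRing R] [Algebra k R] [CommRing S] [Algebra k S]
    [Algebra R S] [IsScalarTower k R S]
    (G : Type*) [Group G] [Fintype G]
    (ρ : G →* (S ≃ₐ[R] S))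
    (hfaithful : Function.Injective ρ)
    (hfixed : ∀ s : S, (∀ g : G, ρ g s = s) → ∃ r : R, algebraMap R S r = s)
    -- the Kassel cocycle on 𝔤 ⊗ S
    (P : (S ⊗[k] 𝔤) →ₗ[k] (S ⊗[k] 𝔤) →ₗ[k]
      (Ω[S⁄k] ⧸ exactDifferentials k S))
    (hP : ∀ (a b : S) (x y : 𝔤),
      P (a ⊗ₜ x) (b ⊗ₜ y) = killingForm k 𝔤 x y •
        (exactDifferentials k S).mkQ (a • KaehlerDifferential.D k S b))
    -- the natural actions of G on 𝔤 ⊗ S and on Ω_S/dS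
    (A : G → ((S ⊗[k] 𝔤) ≃ₗ[k] (S ⊗[k] 𝔤)))
    (hA : ∀ (g : G) (a : S) (x : 𝔤), A g (a ⊗ₜ x) = ρ g a ⊗ₜ x)
    (AΩ : G → ((Ω[S⁄k] ⧸ exactDifferentials k S) ≃ₗ[k]
      (Ω[S⁄k] ⧸ exactDifferentials k S)))
    (hAΩ : ∀ (g : G) (a b : S),
      AΩ g ((exactDifferentials k S).mkQ (a • KaehlerDifferential.D k S b))
        = (exactDifferentials k S).mkQ (ρ g a • KaehlerDifferential.D k S (ρ g b)))
    -- the cocycle u ∈ Z¹(G, Aut_S(𝔤⊗S))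
    (u : G → ((S ⊗[k] 𝔤) ≃ₗ⁅S⁆ (S ⊗[k] 𝔤)))
    (hu : ∀ (g₁ g₂ : G) (v : S ⊗[k] 𝔤),
      u (g₁ * g₂) v = u g₁ (A g₁ (u g₂ (A g₁⁻¹ v))))
    -- the lifts û_g of the u_g to automorphisms of ĝ_S = (𝔤⊗S) ⊕ Ω_S/dS
    (hatu : G → (((S ⊗[k] 𝔤) × (Ω[S⁄k] ⧸ exactDifferentials k S)) ≃ₗ[k]
      ((S ⊗[k] 𝔤) × (Ω[S⁄k] ⧸ exactDifferentials k S))))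
    (hhom : ∀ (g : G) (w w' : (S ⊗[k] 𝔤) × (Ω[S⁄k] ⧸ exactDifferentials k S)),
      hatu g (⁅w.1, w'.1⁆, P w.1 w'.1)
        = (⁅(hatu g w).1, (hatu g w').1⁆, P (hatu g w).1 (hatu g w').1))
    (hlift : ∀ (g : G) (w : (S ⊗[k] 𝔤) × (Ω[S⁄k] ⧸ exactDifferentials k S)),
      (hatu g w).1 = u g w.1) :
    -- conclusion: π(L_û) ⊆ L_u, π : L_û → L_u is surjective, and its kernel
    -- is central in L_û
    (∀ w : (S ⊗[k] 𝔤) × (Ω[S⁄k] ⧸ exactDifferentials k S),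
      (∀ g : G, hatu g (A g w.1, AΩ g w.2) = w) →
      (∀ g : G, u g (A g w.1) = w.1)) ∧
    (∀ v : S ⊗[k] 𝔤, (∀ g : G, u g (A g v) = v) →
      ∃ z : Ω[S⁄k] ⧸ exactDifferentials k S,
        ∀ g : G, hatu g (A g v, AΩ g z) = (v, z)) ∧
    (∀ w : (S ⊗[k] 𝔤) × (Ω[S⁄k] ⧸ exactDifferentials k S),
      (∀ g : G, hatu g (A g w.1, AΩ g w.2) = w) → w.1 = 0 →
      ∀ w' : (S ⊗[k] 𝔤) × (Ω[S⁄k] ⧸ exactDifferentials k S),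
        (∀ g : G, hatu g (A g w'.1, AΩ g w'.2) = w') →
        (⁅w.1, w'.1⁆, P w.1 w'.1)
          = ((0 : S ⊗[k] 𝔤), (0 : Ω[S⁄k] ⧸ exactDifferentials k S))) :=
  statement13_general k 𝔤 R S G ρ P hP A hA AΩ hAΩ u hu hatu hhom hlift
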